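/- arXiv:2202.03926 — 4 statements merged into one kernel-verified Lean document; each statement's English description precedes it below -/
import Mathlib

section
/- Let [a,b] ⊂ ℝ be a compact interval. Then the 1-Wasserstein distance on probability measures on [a,b], given in closed form by d_{W_1}(P,Q) = ∫_0^1 |F_P^{[-1]}(t) − F_Q^{[-1]}(t)| dt, is conditionally negative definite: for every n ∈ ℕ, all probability measures P_1, …, P_n on [a,b] and all real coefficients a_1, …, a_n with Σᵢ aᵢ = 0, one has Σ_{i,j=1}^n aᵢ aⱼ ∫_0^1 |F_{P_i}^{[-1]}(t) − F_{P_j}^{[-1]}(t)| dt ≤ 0. -/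
open MeasureTheory

/-- The generalized inverse cumulative distribution function (quantile function) of a
probability measure `μ` on `ℝ`: `F_μ^{[-1]}(t) = inf {x : F_μ(x) ≥ t}` where
`F_μ(x) = μ((−∞, x])`. -/
noncomputable def invCDF (μ : Measure ℝ) (t : ℝ) : ℝ :=
  sInf {x : ℝ | t ≤ (μ (Set.Iic x)).toReal}

/-!
Pointwise, `|x - y| = x + y - 2 min x y`, and for centred coefficients the terms `x + y`
cancel, while `min x y - m = ∫ 1_{(m, x]} 1_{(m, y]}` is a positive semidefinite kernel.
So `|x - y|` is conditionally negative definite on `ℝ`, and integrating this over `t ∈ (0, 1]`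
along the quantile functions `F_{Pᵢ}^{[-1]}(t)` gives the theorem; compact support makes the
quantile functions bounded and monotone on `(0, 1]`, hence integrable.
-/

open Set

section Kernel

variable {ι : Type*} [Fintype ι]

theorem integral_sum_sum_mul {α : Type*} [MeasurableSpace α] (μ : Measure α) (c : ι → ℝ)
    {K : ι → ι → α → ℝ} (hK : ∀ i j, Integrable (K i j) μ) :
    ∫ t, ∑ i, ∑ j, c i * c j * K i j t ∂μ = ∑ i, ∑ j, c i * c j * ∫ t, K i j t ∂μ := by
  rw [integral_finsetSum _ fun i _ => integrable_finsetSum _ fun j _ => (hK i j).const_mul _]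
  refine Finset.sum_congr rfl fun i _ => ?_
  rw [integral_finsetSum _ fun j _ => (hK i j).const_mul _]
  exact Finset.sum_congr rfl fun j _ => integral_const_mul _ _

theorem integral_indicator_Ioc_mul_indicator_Ioc {m x y : ℝ} (hx : m ≤ x) (hy : m ≤ y) :
    ∫ s, (Ioc m x).indicator 1 s * (Ioc m y).indicator (1 : ℝ → ℝ) s = min x y - m := by
  simp_rw [← inter_indicator_mul, Ioc_inter_Ioc, max_self, Pi.one_apply, one_mul]
  rw [integral_indicator_const _ measurableSet_Ioc, smul_eq_mul, mul_one, Measure.real,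
    Real.volume_Ioc, ENNReal.toReal_ofReal (sub_nonneg.2 (le_min hx hy))]

theorem sum_mul_min_sub_nonneg {m : ℝ} (x : ι → ℝ) (hm : ∀ i, m ≤ x i) (c : ι → ℝ) :
    0 ≤ ∑ i, ∑ j, c i * c j * (min (x i) (x j) - m) := by
  set g : ι → ℝ → ℝ := fun i => (Ioc m (x i)).indicator 1
  have hg : ∀ i j, Integrable (fun s => g i s * g j s) := fun i j =>
    ((integrable_indicator_iff measurableSet_Ioc).2
      (integrableOn_const measure_Ioc_lt_top.ne)).mul_of_top_left
      ((memLp_top_const 1).indicator measurableSet_Ioc)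
  have hsq : ∀ s, ∑ i, ∑ j, c i * c j * (g i s * g j s) = (∑ i, c i * g i s) ^ 2 := fun s => by
    rw [sq, Finset.sum_mul_sum]
    exact Finset.sum_congr rfl fun i _ => Finset.sum_congr rfl fun j _ => by ring
  calc 0 ≤ ∫ s, (∑ i, c i * g i s) ^ 2 := integral_nonneg fun s => sq_nonneg _
    _ = ∫ s, ∑ i, ∑ j, c i * c j * (g i s * g j s) := by simp_rw [hsq]
    _ = ∑ i, ∑ j, c i * c j * ∫ s, g i s * g j s := integral_sum_sum_mul volume c hg
    _ = ∑ i, ∑ j, c i * c j * (min (x i) (x j) - m) := by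
      simp_rw [g, integral_indicator_Ioc_mul_indicator_Ioc (hm _) (hm _)]

theorem sum_mul_abs_sub_nonpos (x c : ι → ℝ) (hc : ∑ i, c i = 0) :
    ∑ i, ∑ j, c i * c j * |x i - x j| ≤ 0 := by
  -- a lower bound for all `x i` that exists even when `ι` is empty
  set m := -∑ i, |x i|
  have hm : ∀ i, m ≤ x i := fun i =>
    (neg_le_neg (Finset.single_le_sum (fun j _ => abs_nonneg (x j)) (Finset.mem_univ i))).trans
      (neg_abs_le _)
  have habs : ∀ i j, c i * c j * |x i - x j| =
      c i * c j * ((x i - m) + (x j - m)) - 2 * (c i * c j * (min (x i) (x j) - m)) := by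
    intro i j
    rw [← max_sub_min_eq_abs']
    linear_combination c i * c j * max_add_min (x i) (x j)
  have hcancel : ∑ i, ∑ j, c i * c j * ((x i - m) + (x j - m)) = 0 := by
    simp only [mul_add, Finset.sum_add_distrib, mul_assoc, ← Finset.mul_sum, ← Finset.sum_mul,
      hc, mul_zero, zero_mul, Finset.sum_const_zero, add_zero]
  have hpsd := sum_mul_min_sub_nonneg x hm c
  simp_rw [habs, Finset.sum_sub_distrib, ← Finset.mul_sum, hcancel]
  linarith

end Kernel

section Quantile

variable {μ : Measure ℝ} [IsProbabilityMeasure μ] {a b t : ℝ}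

theorem mem_setOf_le_measure_Iic (h : μ (Icc a b) = 1) (ht : t ≤ 1) :
    b ∈ {x : ℝ | t ≤ (μ (Iic x)).toReal} := by
  have : μ (Iic b) = 1 := le_antisymm prob_le_one (h ▸ measure_mono Icc_subset_Iic_self)
  simpa [this] using ht

theorem lowerBounds_setOf_le_measure_Iic (h : μ (Icc a b) = 1) (ht : 0 < t) :
    a ∈ lowerBounds {x : ℝ | t ≤ (μ (Iic x)).toReal} := by
  intro x hx
  by_contra! hxa
  have hcompl : μ (Icc a b)ᶜ = 0 := by
    rw [prob_compl_eq_zero_iff measurableSet_Icc, h]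
  have : μ (Iic x) = 0 := measure_mono_null
    (fun y (hy : y ≤ x) (hy' : y ∈ Icc a b) => (hy'.1.trans hy).not_gt hxa : Iic x ⊆ (Icc a b)ᶜ)
    hcompl
  simp [this] at hx
  linarith

theorem invCDF_mem_Icc (h : μ (Icc a b) = 1) (ht : t ∈ Ioc 0 1) : invCDF μ t ∈ Icc a b :=
  ⟨le_csInf ⟨b, mem_setOf_le_measure_Iic h ht.2⟩ (lowerBounds_setOf_le_measure_Iic h ht.1),
    csInf_le ⟨a, lowerBounds_setOf_le_measure_Iic h ht.1⟩ (mem_setOf_le_measure_Iic h ht.2)⟩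

theorem monotoneOn_invCDF (h : μ (Icc a b) = 1) : MonotoneOn (invCDF μ) (Ioc 0 1) :=
  fun _ hs _ ht hst => csInf_le_csInf ⟨a, lowerBounds_setOf_le_measure_Iic h hs.1⟩
    ⟨b, mem_setOf_le_measure_Iic h ht.2⟩ fun _ hx => hst.trans hx

end Quantile

theorem integrableOn_abs_invCDF_sub {μ ν : Measure ℝ} [IsProbabilityMeasure μ]
    [IsProbabilityMeasure ν] {a b : ℝ} (hμ : μ (Icc a b) = 1) (hν : ν (Icc a b) = 1) :
    IntegrableOn (fun t => |invCDF μ t - invCDF ν t|) (Ioc 0 1) := by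
  refine IntegrableOn.of_bound measure_Ioc_lt_top ?_ (b - a) ?_
  · exact ((aemeasurable_restrict_of_monotoneOn measurableSet_Ioc (monotoneOn_invCDF hμ)).sub
      (aemeasurable_restrict_of_monotoneOn measurableSet_Ioc
        (monotoneOn_invCDF hν))).abs.aestronglyMeasurable
  · refine (ae_restrict_iff' measurableSet_Ioc).2 (ae_of_all _ fun t ht => ?_)
    have hμt := invCDF_mem_Icc hμ ht
    have hνt := invCDF_mem_Icc hν ht
    rw [Real.norm_eq_abs, abs_abs, abs_sub_le_iff]
    constructor <;> linarith [hμt.1, hμt.2, hνt.1, hνt.2]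

theorem wasserstein1_cnd_general (a b : ℝ) :
    ∀ (n : ℕ) (P : Fin n → Measure ℝ), (∀ i, IsProbabilityMeasure (P i)) →
      (∀ i, P i (Set.Icc a b) = 1) →
      ∀ c : Fin n → ℝ, (∑ i, c i) = 0 →
        (∑ i, ∑ j, c i * c j *
          ∫ t in Set.Ioc (0 : ℝ) 1, |invCDF (P i) t - invCDF (P j) t|) ≤ 0 := by
  intro n P hP hsupp c hc
  rw [← integral_sum_sum_mul _ c fun i j => integrableOn_abs_invCDF_sub (hsupp i) (hsupp j)]
  exact integral_nonpos fun t => sum_mul_abs_sub_nonpos (fun i => invCDF (P i) t) c hc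

/-- **The 1-Wasserstein distance on a compact interval is conditionally negative definite.**
Let `[a,b] ⊂ ℝ` be a compact interval.  The 1-Wasserstein distance between probability measures
on `[a,b]`, given in closed form by `d_{W₁}(P,Q) = ∫_0^1 |F_P^{[-1]}(t) − F_Q^{[-1]}(t)| dt`,
is conditionally negative definite: for every `n`, all probability measures `P₁, …, Pₙ`
supported on `[a,b]` and all real coefficients `a₁, …, aₙ` with `∑ᵢ aᵢ = 0`, one has
`∑_{i,j} aᵢ aⱼ ∫_0^1 |F_{Pᵢ}^{[-1]}(t) − F_{Pⱼ}^{[-1]}(t)| dt ≤ 0`. -/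
theorem wasserstein1_cnd (a b : ℝ) (hab : a ≤ b) :
    ∀ (n : ℕ) (P : Fin n → Measure ℝ), (∀ i, IsProbabilityMeasure (P i)) →
      (∀ i, P i (Set.Icc a b) = 1) →
      ∀ c : Fin n → ℝ, (∑ i, c i) = 0 →
        (∑ i, ∑ j, c i * c j *
          ∫ t in Set.Ioc (0 : ℝ) 1, |invCDF (P i) t - invCDF (P j) t|) ≤ 0 :=
  wasserstein1_cnd_general a b
end

section
/- Let M be a set, F a real Hilbert space, Φ : M → F a map, and let d(x,y) = ‖Φ(x) − Φ(y)‖_F be the induced Hilbertian pseudo-distance. Then for every γ ≥ 0 and every β ∈ [0,1], the function K(x,y) = exp(−γ · d(x,y)^{2β}) is a positive definite kernel on M: for every n ∈ ℕ, all x_1, …, x_n ∈ M and all c ∈ ℝ^n, Σ_{i,j=1}^n cᵢ cⱼ K(xᵢ, xⱼ) ≥ 0. -/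
/-!
Schoenberg's argument. The matrix `ψ i j = ‖Φ (x i) - Φ (x j)‖ ^ 2` is conditionally negative
semidefinite (CND): its quadratic form is nonpositive on vectors with coordinate sum zero.
For every CND matrix `ψ`, `exp (-ψ)` (entrywise) is positive semidefinite: fixing an index `o`,
the matrix `ψ i o + ψ o j - ψ i j - ψ o o` is positive semidefinite, hence so is its entrywise
exponential (Schur product theorem and the exponential series), and `exp (-ψ)` is a positive
diagonal congruence of the latter. Entrywise `x ↦ x ^ β`, `β ∈ [0, 1]`, preserves CND matrices
with nonnegative entries: by the representation `x ^ β = ∫ (t ^ (β - 1) - t ^ β (t + x)⁻¹) dμ(t)`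
and `(t + x)⁻¹ = ∫ exp (-t s) exp (-s x) ds`, this reduces to positive semidefiniteness of
`exp (-s ψ)`. Applying both facts to `γ • ψ ^ β` gives the theorem.
-/

open Matrix MeasureTheory Set Filter

theorem integral_exp_neg_mul_Ioi_zero {a : ℝ} (ha : 0 < a) :
    ∫ s in Ioi 0, Real.exp (-a * s) = a⁻¹ := by
  rw [integral_exp_mul_Ioi (neg_neg_of_pos ha) 0]
  simp [neg_div]

namespace Matrix

variable {ι : Type*} [Fintype ι]

theorem isClosed_setOf_posSemidef : IsClosed {A : Matrix ι ι ℝ | A.PosSemidef} := by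
  simp only [posSemidef_iff_dotProduct_mulVec, ofPred_and, ofPred_forall]
  refine (isClosed_eq continuous_id.matrix_conjTranspose continuous_id).inter <|
    isClosed_iInter fun x => isClosed_le continuous_const ?_
  exact continuous_const.dotProduct (continuous_id.matrix_mulVec continuous_const)

theorem PosSemidef.map_pow {A : Matrix ι ι ℝ} (hA : A.PosSemidef) (m : ℕ) :
    (A.map (· ^ m)).PosSemidef := by
  induction m with
  | zero =>
    convert posSemidef_vecMulVec_self_star (fun _ : ι => (1 : ℝ)) using 1
    ext; simp [vecMulVec]
  | succ m ih =>
    have : A.map (· ^ (m + 1)) = A.map (· ^ m) ⊙ A := by ext; simp [pow_succ]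
    exact this ▸ ih.hadamard hA

theorem PosSemidef.map_exp {A : Matrix ι ι ℝ} (hA : A.PosSemidef) :
    (A.map Real.exp).PosSemidef := by
  have hsum : HasSum (fun m : ℕ => (m.factorial : ℝ)⁻¹ • A.map (· ^ m)) (A.map Real.exp) := by
    refine Pi.hasSum.2 fun i => Pi.hasSum.2 fun j => ?_
    simpa [Real.exp_eq_exp_ℝ, div_eq_inv_mul] using
      NormedSpace.expSeries_div_hasSum_exp (A i j)
  refine isClosed_setOf_posSemidef.mem_of_tendsto hsum.tendsto_sum_nat
    (Eventually.of_forall fun N => ?_)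
  exact posSemidef_sum _ fun m _ => (hA.map_pow m).smul (by positivity)

def IsCondNegSemidef (A : Matrix ι ι ℝ) : Prop :=
  A.IsSymm ∧ ∀ x : ι → ℝ, ∑ i, x i = 0 → x ⬝ᵥ A *ᵥ x ≤ 0

theorem IsCondNegSemidef.smul {A : Matrix ι ι ℝ} (hA : A.IsCondNegSemidef) {t : ℝ} (ht : 0 ≤ t) :
    (t • A).IsCondNegSemidef := by
  refine ⟨hA.1.smul t, fun x hx => ?_⟩
  rw [smul_mulVec, dotProduct_smul, smul_eq_mul]
  exact mul_nonpos_of_nonneg_of_nonpos ht (hA.2 x hx)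

theorem PosSemidef.isCondNegSemidef_add_sub {B : Matrix ι ι ℝ} (hB : B.PosSemidef) (a : ι → ℝ) :
    (of fun i j => a i + a j - B i j).IsCondNegSemidef := by
  refine ⟨IsSymm.ext fun i j => ?_, fun x hx => ?_⟩
  · simp [add_comm, (isHermitian_iff_isSymm.1 hB.isHermitian).apply i j]
  have hquad : x ⬝ᵥ (of fun i j => a i + a j - B i j) *ᵥ x = -(x ⬝ᵥ B *ᵥ x) := by
    simp only [dotProduct, mulVec, of_apply, add_mul, sub_mul, mul_add, mul_sub,
      Finset.sum_add_distrib, Finset.sum_sub_distrib, ← mul_assoc, ← Finset.mul_sum,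
      ← Finset.sum_mul, hx]
    simp
  simpa [hquad] using hB.dotProduct_mulVec_nonneg x

theorem IsCondNegSemidef.posSemidef_centered {ψ : Matrix ι ι ℝ} (hψ : ψ.IsCondNegSemidef)
    [DecidableEq ι] (o : ι) :
    (of fun i j => ψ i o + ψ o j - ψ i j - ψ o o).PosSemidef := by
  refine .of_dotProduct_mulVec_nonneg (isHermitian_iff_isSymm.2 <| IsSymm.ext fun i j => ?_)
    fun x => ?_
  · simp only [of_apply, hψ.1.apply]
    ring
  set y := x - (∑ i, x i) • Pi.single o 1
  have hy : ∑ i, y i = 0 := by simp [y, Finset.sum_sub_distrib, Pi.single_apply]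
  have hquad : x ⬝ᵥ (of fun i j => ψ i o + ψ o j - ψ i j - ψ o o) *ᵥ x = -(y ⬝ᵥ ψ *ᵥ y) := by
    simp only [y, mulVec_sub, mulVec_smul, mulVec_single_one, dotProduct_sub, sub_dotProduct,
      dotProduct_smul, smul_dotProduct, single_one_dotProduct, smul_eq_mul]
    simp only [dotProduct, mulVec, of_apply, col_apply, add_mul, sub_mul, mul_add, mul_sub,
      Finset.sum_add_distrib, Finset.sum_sub_distrib, ← mul_assoc, ← Finset.mul_sum,
      ← Finset.sum_mul]
    ring
  rw [star_trivial, hquad]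
  exact neg_nonneg.2 (hψ.2 y hy)

theorem IsCondNegSemidef.posSemidef_map_exp_neg {ψ : Matrix ι ι ℝ} (hψ : ψ.IsCondNegSemidef) :
    (ψ.map fun a => Real.exp (-a)).PosSemidef := by
  classical
  rcases isEmpty_or_nonempty ι with _ | ⟨⟨o⟩⟩
  · exact Subsingleton.elim (0 : Matrix ι ι ℝ) (ψ.map fun a => Real.exp (-a)) ▸ .zero
  set d : ι → ℝ := fun i => Real.exp (-ψ i o)
  have hfactor : ψ.map (fun a => Real.exp (-a)) = Real.exp (ψ o o) • ((diagonal d)ᴴ *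
      (of fun i j => ψ i o + ψ o j - ψ i j - ψ o o).map Real.exp * diagonal d) := by
    ext i j
    simp only [map_apply, smul_apply, diagonal_conjTranspose, mul_diagonal, diagonal_mul,
      of_apply, d, star_trivial, smul_eq_mul, ← Real.exp_add, hψ.1.apply o j]
    congr 1
    ring
  rw [hfactor]
  exact ((hψ.posSemidef_centered o).map_exp.conjTranspose_mul_mul_same _).smul (Real.exp_pos _).le

section Integral

variable {α : Type*} [MeasurableSpace α] {μ : Measure α} {f : α → Matrix ι ι ℝ}

theorem dotProduct_mulVec_entrywise_integral (hf : ∀ i j, Integrable (fun s => f s i j) μ)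
    (x : ι → ℝ) :
    x ⬝ᵥ (of fun i j => ∫ s, f s i j ∂μ) *ᵥ x = ∫ s, x ⬝ᵥ f s *ᵥ x ∂μ := by
  simp only [dotProduct, mulVec, of_apply]
  rw [integral_finsetSum _ fun i _ => (integrable_finsetSum _ fun j _ =>
    (hf i j).mul_const _).const_mul _]
  refine Finset.sum_congr rfl fun i _ => ?_
  rw [integral_const_mul, integral_finsetSum _ fun j _ => (hf i j).mul_const _]
  simp only [integral_mul_const]

theorem posSemidef_entrywise_integral (hf : ∀ i j, Integrable (fun s => f s i j) μ)
    (hpos : ∀ᵐ s ∂μ, (f s).PosSemidef) : (of fun i j => ∫ s, f s i j ∂μ).PosSemidef := by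
  refine .of_dotProduct_mulVec_nonneg (isHermitian_iff_isSymm.2 <| IsSymm.ext fun i j => ?_)
    fun x => ?_
  · exact integral_congr_ae <| hpos.mono fun s hs => (isHermitian_iff_isSymm.1 hs.1).apply i j
  rw [star_trivial, dotProduct_mulVec_entrywise_integral hf]
  exact integral_nonneg_of_ae <| hpos.mono fun s hs => by
    simpa using hs.dotProduct_mulVec_nonneg x

theorem isCondNegSemidef_entrywise_integral (hf : ∀ i j, Integrable (fun s => f s i j) μ)
    (hcnd : ∀ᵐ s ∂μ, (f s).IsCondNegSemidef) :
    (of fun i j => ∫ s, f s i j ∂μ).IsCondNegSemidef := by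
  refine ⟨IsSymm.ext fun i j => ?_, fun x hx => ?_⟩
  · exact integral_congr_ae <| hcnd.mono fun s hs => hs.1.apply i j
  rw [dotProduct_mulVec_entrywise_integral hf]
  exact integral_nonpos_of_ae <| hcnd.mono fun s hs => hs.2 x hx

end Integral

theorem IsCondNegSemidef.posSemidef_map_inv_add {ψ : Matrix ι ι ℝ} (hψ : ψ.IsCondNegSemidef)
    (hψ0 : ∀ i j, 0 ≤ ψ i j) {t : ℝ} (ht : 0 < t) :
    (ψ.map fun a => (t + a)⁻¹).PosSemidef := by
  set f : ℝ → Matrix ι ι ℝ := fun s => Real.exp (-t * s) • (s • ψ).map fun a => Real.exp (-a)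
  have hf : ∀ i j s, f s i j = Real.exp (-(t + ψ i j) * s) := fun i j s => by
    simp only [f, smul_apply, map_apply, smul_eq_mul, ← Real.exp_add]
    ring_nf
  have hlaplace : ψ.map (fun a => (t + a)⁻¹) = of fun i j => ∫ s in Ioi 0, f s i j := by
    ext i j
    simp only [map_apply, of_apply, hf]
    exact (integral_exp_neg_mul_Ioi_zero (by linarith [hψ0 i j])).symm
  rw [hlaplace]
  refine posSemidef_entrywise_integral (fun i j => ?_) ?_
  · simp only [hf]
    exact integrableOn_exp_mul_Ioi (by linarith [hψ0 i j] : -(t + ψ i j) < 0) 0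
  · filter_upwards [ae_restrict_mem measurableSet_Ioi] with s hs
    exact (hψ.smul (le_of_lt hs)).posSemidef_map_exp_neg.smul (Real.exp_pos _).le

theorem IsCondNegSemidef.map_rpow {ψ : Matrix ι ι ℝ} (hψ : ψ.IsCondNegSemidef)
    (hψ0 : ∀ i j, 0 ≤ ψ i j) {p : ℝ} (hp : p ∈ Icc 0 1) :
    (ψ.map (· ^ p)).IsCondNegSemidef := by
  rcases hp.1.eq_or_lt with rfl | hp0
  -- `x ^ (0 : ℝ) = 1` also at `x = 0`, so `ψ.map (· ^ 0)` is the all-ones matrix.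
  · convert PosSemidef.zero.isCondNegSemidef_add_sub (fun _ : ι => (1 / 2 : ℝ)) using 1
    ext; norm_num
  rcases hp.2.eq_or_lt with rfl | hp1
  · simpa using hψ
  obtain ⟨μ, hμ⟩ := Real.exists_measure_rpow_eq_integral_rpowIntegrand₀₁ ⟨hp0, hp1⟩
  have hrepr :
      ψ.map (· ^ p) = of fun i j => ∫ t in Ioi 0, Real.rpowIntegrand₀₁ p t (ψ i j) ∂μ :=
    ext fun i j => (hμ _ (hψ0 i j)).2
  rw [hrepr]
  refine isCondNegSemidef_entrywise_integral
    (f := fun t => of fun i j => Real.rpowIntegrand₀₁ p t (ψ i j))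
    (fun i j => (hμ _ (hψ0 i j)).1) ?_
  filter_upwards [ae_restrict_mem measurableSet_Ioi] with t ht
  have hPSD := (hψ.posSemidef_map_inv_add hψ0 ht).smul (Real.rpow_nonneg (le_of_lt ht) p)
  convert hPSD.isCondNegSemidef_add_sub (fun _ => t ^ (p - 1) / 2) using 2
  ext i j
  simp [Real.rpowIntegrand₀₁_eq_sub hp1.ne ht]

theorem isCondNegSemidef_norm_sub_sq {F : Type*} [NormedAddCommGroup F] [InnerProductSpace ℝ F]
    (u : ι → F) : (of fun i j => ‖u i - u j‖ ^ 2).IsCondNegSemidef := by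
  convert ((posSemidef_gram ℝ u).smul (by norm_num : (0 : ℝ) ≤ 2)).isCondNegSemidef_add_sub
    (fun i => ‖u i‖ ^ 2) using 1
  ext i j
  simp [norm_sub_sq_real]
  ring

end Matrix

theorem gaussian_like_distance_substitution_kernel_posdef_general
    {M : Type*} {F : Type*} [NormedAddCommGroup F] [InnerProductSpace ℝ F]
    (Φ : M → F) (γ : ℝ) (hγ : 0 ≤ γ) (β : ℝ) (hβ : β ∈ Set.Icc (0 : ℝ) 1) :
    ∀ (n : ℕ) (x : Fin n → M) (c : Fin n → ℝ),
      0 ≤ ∑ i, ∑ j, c i * c j * Real.exp (-γ * ‖Φ (x i) - Φ (x j)‖ ^ (2 * β)) := by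
  intro n x c
  have hK := (((isCondNegSemidef_norm_sub_sq (Φ ∘ x)).map_rpow (fun _ _ => sq_nonneg _)
    hβ).smul hγ).posSemidef_map_exp_neg
  refine (hK.dotProduct_mulVec_nonneg c).trans_eq ?_
  simp only [dotProduct, mulVec, Finset.mul_sum, star_trivial]
  refine Finset.sum_congr rfl fun i _ => Finset.sum_congr rfl fun j _ => ?_
  rw [Real.rpow_mul (norm_nonneg _), Real.rpow_two]
  simp only [map_apply, Matrix.smul_apply, of_apply, Function.comp_apply, smul_eq_mul, neg_mul]
  ring

/-- **Distance substitution kernels from Hilbertian pseudo-distances are positive definite.**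
Let `M` be a set, `F` a real Hilbert space, `Φ : M → F`, and `d(x,y) = ‖Φ(x) − Φ(y)‖_F` the
induced Hilbertian pseudo-distance.  Then for every `γ ≥ 0` and `β ∈ [0,1]`, the kernel
`K(x,y) = exp(−γ·d(x,y)^{2β})` is positive definite: for every `n`, all `x₁, …, xₙ ∈ M` and
all `c ∈ ℝⁿ`, `∑_{i,j} cᵢ cⱼ K(xᵢ, xⱼ) ≥ 0`. -/
theorem gaussian_like_distance_substitution_kernel_posdef
    {M : Type*} {F : Type*} [NormedAddCommGroup F] [InnerProductSpace ℝ F] [CompleteSpace F]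
    (Φ : M → F) (γ : ℝ) (hγ : 0 ≤ γ) (β : ℝ) (hβ : β ∈ Set.Icc (0 : ℝ) 1) :
    ∀ (n : ℕ) (x : Fin n → M) (c : Fin n → ℝ),
      0 ≤ ∑ i, ∑ j, c i * c j * Real.exp (-γ * ‖Φ (x i) - Φ (x j)‖ ^ (2 * β)) :=
  gaussian_like_distance_substitution_kernel_posdef_general Φ γ hγ β hβ
end

section
/- Let (X, d_X) be a nonempty compact metric space, F a separable real Hilbert space, Φ : X → F a continuous and injective map, and γ > 0. Then the linear span of the family of functions {x ↦ exp(−γ‖Φ(x) − Φ(y)‖²_F) : y ∈ X} is dense in the space C(X, ℝ) of continuous real-valued functions on X equipped with the supremum norm (equivalently, the Gaussian-type kernel K(x,y) = exp(−γ‖Φ(x) − Φ(y)‖²_F) is universal on X). -/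
/-!
Expanding `exp (2γ⟪z, w⟫)` in the coordinates of a Hilbert basis `(b i)` of `F` writes the kernel
as `exp (-γ‖z - w‖²) = ⟪ψ z, ψ w⟫` for a continuous feature map `ψ` into `ℓ²(Σ n, Fin n → ι)`, whose
`(n, v)`-coordinate is `√((2γ)ⁿ / n!) · exp (-γ‖z‖²) · ∏ₖ ⟪b (v k), z⟫`.
The continuous linear map `u ↦ (x ↦ ⟪ψ (Φ x), u⟫)` from `ℓ²` to `C(X, ℝ)` sends `ψ (Φ y)` to the
kernel section at `y` and vanishes on `(range ψ)ᗮ`, so its whole range, in particular every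
coordinate of `ψ ∘ Φ`, lies in the closed span of the kernel sections. Hence so does
`exp (-γ‖Φ x‖²)` times any monomial in the functions `x ↦ ⟪b i, Φ x⟫`. These generate a
point-separating subalgebra, dense by Stone–Weierstrass, and multiplying by the unit
`exp (-γ‖Φ x‖²)` preserves density.
-/

open scoped Nat InnerProductSpace

section Series

variable {ι : Type*}

theorem HasSum.pi_prod_pow {d : ι → ℝ} {t : ℝ} (hd : HasSum d t)
    (hd' : Summable fun i => ‖d i‖) (n : ℕ) :
    HasSum (fun v : Fin n → ι => ∏ k, d (v k)) (t ^ n) := by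
  induction n generalizing d t with
  | zero => simp
  | succ n ih =>
    have hnorm : Summable fun v : Fin n → ι => ‖∏ k, d (v k)‖ := by
      simpa only [norm_prod] using (ih (d := (‖d ·‖)) hd'.hasSum (by simpa using hd')).summable
    have hsum := summable_mul_of_summable_norm (R := ℝ) (f := d)
      (g := fun v : Fin n → ι => ∏ k, d (v k)) hd' hnorm
    have hprod := hd.mul (ih hd hd') hsum
    have hcons : (fun v : Fin (n + 1) → ι => ∏ k, d (v k)) ∘ Fin.consEquiv (fun _ => ι) =
        fun p => d p.1 * ∏ k, d (p.2 k) := by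
      ext p
      simp [Fin.consEquiv, Fin.prod_univ_succ]
    rwa [pow_succ', ← (Fin.consEquiv fun _ => ι).hasSum_iff, hcons]

theorem HasSum.sigma_pi_exp_mul {d : ι → ℝ} {t : ℝ} (hd : HasSum d t)
    (hd' : Summable fun i => ‖d i‖) (c : ℝ) :
    HasSum (fun j : Σ n : ℕ, Fin n → ι => c ^ j.1 / j.1 ! * ∏ k, d (j.2 k))
      (Real.exp (c * t)) := by
  have hexp (x : ℝ) : HasSum (fun n : ℕ => x ^ n / n !) (Real.exp x) := by
    simpa [← Real.exp_eq_exp_ℝ] using NormedSpace.expSeries_div_hasSum_exp (𝔸 := ℝ) x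
  have hd'' : Summable fun i => ‖‖d i‖‖ := by simpa using hd'
  have hfiber (n : ℕ) : HasSum (fun v : Fin n → ι => ‖c ^ n / n ! * ∏ k, d (v k)‖)
      (‖c‖ ^ n / n ! * (∑' i, ‖d i‖) ^ n) := by
    simpa [norm_prod] using (hd'.hasSum.pi_prod_pow hd'' n).mul_left (‖c‖ ^ n / n !)
  have hnorm : Summable fun j : Σ n : ℕ, Fin n → ι => ‖c ^ j.1 / j.1 ! * ∏ k, d (j.2 k)‖ := by
    refine (summable_sigma_of_nonneg fun _ => norm_nonneg _).2
      ⟨fun n => (hfiber n).summable, ?_⟩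
    simp_rw [(hfiber _).tsum_eq]
    simpa [mul_pow, div_mul_eq_mul_div] using Real.summable_pow_div_factorial (‖c‖ * ∑' i, ‖d i‖)
  refine HasSum.sigma_of_hasSum ?_ (fun n => (hd.pi_prod_pow hd' n).mul_left (c ^ n / n !))
    hnorm.of_norm
  simpa [mul_pow, div_mul_eq_mul_div] using hexp (c * t)

end Series

section FeatureMap

variable {X H : Type*} [TopologicalSpace X] [NormedAddCommGroup H] [InnerProductSpace ℝ H]

theorem continuous_of_continuous_inner {ψ : X → H}
    (h : Continuous fun p : X × X => ⟪ψ p.1, ψ p.2⟫_ℝ) : Continuous ψ := by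
  rw [continuous_iff_continuousAt]
  intro y
  have hdist (z : X) : ‖ψ z - ψ y‖ = √(⟪ψ z, ψ z⟫_ℝ - 2 * ⟪ψ z, ψ y⟫_ℝ + ⟪ψ y, ψ y⟫_ℝ) := by
    rw [real_inner_self_eq_norm_sq, real_inner_self_eq_norm_sq, ← norm_sub_sq_real,
      Real.sqrt_sq (norm_nonneg _)]
  have hcont : Continuous fun z => √(⟪ψ z, ψ z⟫_ℝ - 2 * ⟪ψ z, ψ y⟫_ℝ + ⟪ψ y, ψ y⟫_ℝ) := by
    have h1 := h.comp (continuous_id.prodMk continuous_id)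
    have h2 := h.comp (continuous_id.prodMk (continuous_const (y := y)))
    exact ((h1.sub (continuous_const.mul h2)).add continuous_const).sqrt
  rw [ContinuousAt, tendsto_iff_norm_sub_tendsto_zero]
  simp_rw [hdist]
  convert hcont.tendsto y using 2
  ring_nf
  simp

variable [CompactSpace X]

noncomputable def ContinuousMap.innerCLM (ψ : C(X, H)) : H →L[ℝ] C(X, ℝ) :=
  LinearMap.mkContinuous
    { toFun u := ⟨fun x => ⟪ψ x, u⟫_ℝ, by fun_prop⟩
      map_add' u v := by ext; simp [inner_add_right]
      map_smul' a u := by ext; simp [inner_smul_right] }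
    ‖ψ‖ fun u => (ContinuousMap.norm_le _ (by positivity)).2 fun x =>
      (norm_inner_le_norm (ψ x) u).trans
        (mul_le_mul_of_nonneg_right (ψ.norm_coe_le_norm x) (norm_nonneg u))

@[simp]
theorem ContinuousMap.innerCLM_apply (ψ : C(X, H)) (u : H) (x : X) :
    ψ.innerCLM u x = ⟪ψ x, u⟫_ℝ := rfl

theorem ContinuousMap.innerCLM_mem_closure_span [CompleteSpace H] (ψ : C(X, H)) (u : H) :
    ψ.innerCLM u ∈
      (Submodule.span ℝ (Set.range fun y => ψ.innerCLM (ψ y))).topologicalClosure := by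
  set N := (Submodule.span ℝ (Set.range ψ)).topologicalClosure
  set M := Submodule.span ℝ (Set.range fun y => ψ.innerCLM (ψ y))
  have hψN (x : X) : ψ x ∈ N := Submodule.le_topologicalClosure _ (Submodule.subset_span ⟨x, rfl⟩)
  have hN : N ≤ M.topologicalClosure.comap ψ.innerCLM.toLinearMap := by
    refine Submodule.topologicalClosure_minimal _ ?_
      (M.isClosed_topologicalClosure.preimage ψ.innerCLM.continuous)
    rw [Submodule.span_le]
    rintro _ ⟨y, rfl⟩
    exact Submodule.le_topologicalClosure _ (Submodule.subset_span ⟨y, rfl⟩)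
  have hNperp : Nᗮ ≤ M.topologicalClosure.comap ψ.innerCLM.toLinearMap := by
    intro v hv
    have : ψ.innerCLM v = 0 := by
      ext x
      exact Submodule.inner_right_of_mem_orthogonal (hψN x) hv
    simp [this]
  have hsup := sup_le hN hNperp
  rw [Submodule.sup_orthogonal_of_hasOrthogonalProjection] at hsup
  exact hsup Submodule.mem_top

end FeatureMap

section GaussianFeature

variable {ι F : Type*} [NormedAddCommGroup F] [InnerProductSpace ℝ F] (b : HilbertBasis ι ℝ F)
  {γ : ℝ}

noncomputable def gaussianFeature (γ : ℝ) (z : F) (j : Σ n : ℕ, Fin n → ι) : ℝ :=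
  √((2 * γ) ^ j.1 / j.1 !) * (Real.exp (-γ * ‖z‖ ^ 2) * ∏ k, ⟪b (j.2 k), z⟫_ℝ)

theorem hasSum_gaussianFeature_mul (hγ : 0 ≤ γ) (z w : F) :
    HasSum (fun j => gaussianFeature b γ z j * gaussianFeature b γ w j)
      (Real.exp (-γ * ‖z - w‖ ^ 2)) := by
  have hd : HasSum (fun i => ⟪b i, z⟫_ℝ * ⟪b i, w⟫_ℝ) ⟪z, w⟫_ℝ := by
    simpa only [real_inner_comm z] using b.hasSum_inner_mul_inner z w
  have hd' : Summable fun i => ‖⟪b i, z⟫_ℝ * ⟪b i, w⟫_ℝ‖ := by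
    simpa [norm_mul, b.repr_apply_apply] using
      lp.summable_mul (by simpa using Real.HolderConjugate.two_two) (b.repr z) (b.repr w)
  have hexp := (hd.sigma_pi_exp_mul hd' (2 * γ)).mul_left
    (Real.exp (-γ * ‖z‖ ^ 2) * Real.exp (-γ * ‖w‖ ^ 2))
  have hvalue : Real.exp (-γ * ‖z - w‖ ^ 2) =
      Real.exp (-γ * ‖z‖ ^ 2) * Real.exp (-γ * ‖w‖ ^ 2) * Real.exp (2 * γ * ⟪z, w⟫_ℝ) := by
    rw [norm_sub_sq_real, ← Real.exp_add, ← Real.exp_add]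
    ring_nf
  have hterm (j : Σ n : ℕ, Fin n → ι) : gaussianFeature b γ z j * gaussianFeature b γ w j =
      Real.exp (-γ * ‖z‖ ^ 2) * Real.exp (-γ * ‖w‖ ^ 2) *
        ((2 * γ) ^ j.1 / j.1 ! * ∏ k, ⟪b (j.2 k), z⟫_ℝ * ⟪b (j.2 k), w⟫_ℝ) := by
    have hweight := Real.mul_self_sqrt (by positivity : 0 ≤ (2 * γ) ^ j.1 / j.1 !)
    simp only [gaussianFeature, Finset.prod_mul_distrib]
    linear_combination (Real.exp (-γ * ‖z‖ ^ 2) * Real.exp (-γ * ‖w‖ ^ 2) *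
      (∏ k, ⟪b (j.2 k), z⟫_ℝ) * ∏ k, ⟪b (j.2 k), w⟫_ℝ) * hweight
  rw [hvalue, funext hterm]
  exact hexp

noncomputable def gaussianFeatureMap (hγ : 0 ≤ γ) (z : F) :
    lp (fun _ : Σ n : ℕ, Fin n → ι => ℝ) 2 :=
  ⟨gaussianFeature b γ z, memℓp_gen <| by
    simpa [← sq] using (hasSum_gaussianFeature_mul b hγ z z).summable⟩

theorem inner_gaussianFeatureMap (hγ : 0 ≤ γ) (z w : F) :
    ⟪gaussianFeatureMap b hγ z, gaussianFeatureMap b hγ w⟫_ℝ = Real.exp (-γ * ‖z - w‖ ^ 2) :=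
  (lp.hasSum_inner _ _).unique <| by
    have hterm : (fun j => ⟪gaussianFeatureMap b hγ z j, gaussianFeatureMap b hγ w j⟫_ℝ) =
        fun j => gaussianFeature b γ z j * gaussianFeature b γ w j := by
      ext j
      simp [gaussianFeatureMap, mul_comm]
    rw [hterm]
    exact hasSum_gaussianFeature_mul b hγ z w

theorem continuous_gaussianFeatureMap (hγ : 0 ≤ γ) : Continuous (gaussianFeatureMap b hγ) :=
  continuous_of_continuous_inner <| by
    simp_rw [inner_gaussianFeatureMap]
    fun_prop

theorem inner_gaussianFeatureMap_single [DecidableEq (Σ n : ℕ, Fin n → ι)] (hγ : 0 ≤ γ) (z : F)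
    (j : Σ n : ℕ, Fin n → ι) :
    ⟪gaussianFeatureMap b hγ z, lp.single 2 j 1⟫_ℝ = gaussianFeature b γ z j := by
  rw [lp.inner_single_right]
  simp [gaussianFeatureMap]

end GaussianFeature

theorem Submonoid.exists_fin_prod_eq_of_mem_closure_range {M ι : Type*} [CommMonoid M]
    {g : ι → M} {p : M} (hp : p ∈ Submonoid.closure (Set.range g)) :
    ∃ n, ∃ v : Fin n → ι, ∏ k, g (v k) = p := by
  obtain ⟨l, hl, rfl⟩ := Submonoid.exists_list_of_mem_closure hp
  choose v hv using fun k : Fin l.length => hl _ (l.get_mem k)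
  refine ⟨l.length, v, ?_⟩
  simp_rw [hv]
  rw [← List.prod_ofFn, List.ofFn_get]

theorem Algebra.mul_mem_of_mem_adjoin_range {R A ι : Type*} [CommSemiring R] [CommSemiring A]
    [Algebra R A] {M : Submodule R A} {u : A} {g : ι → A}
    (hM : ∀ n (v : Fin n → ι), u * ∏ k, g (v k) ∈ M) {p : A}
    (hp : p ∈ Algebra.adjoin R (Set.range g)) : u * p ∈ M := by
  have hp' : p ∈ Subalgebra.toSubmodule (Algebra.adjoin R (Set.range g)) := hp
  rw [Algebra.adjoin_eq_span] at hp'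
  refine (Submodule.span_le (p := M.comap (LinearMap.mulLeft R u))).2 ?_ hp'
  intro q hq
  obtain ⟨n, v, rfl⟩ := Submonoid.exists_fin_prod_eq_of_mem_closure_range hq
  exact hM n v

theorem ContinuousMap.dense_of_mul_prod_mem {X ι : Type*} [TopologicalSpace X] [CompactSpace X]
    {M : Submodule ℝ C(X, ℝ)} {u : C(X, ℝ)} (hu : IsUnit u) {g : ι → C(X, ℝ)}
    (hsep : (Algebra.adjoin ℝ (Set.range g)).SeparatesPoints)
    (hM : ∀ n (v : Fin n → ι), u * ∏ k, g (v k) ∈ M) : Dense (M : Set C(X, ℝ)) := by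
  have hA : Dense (Algebra.adjoin ℝ (Set.range g) : Set C(X, ℝ)) := by
    rw [dense_iff_closure_eq, ← Subalgebra.topologicalClosure_coe,
      subalgebra_topologicalClosure_eq_top_of_separatesPoints _ hsep, Algebra.coe_top]
  have huA := (IsUnit.isUnit_iff_mulLeft_bijective.1 hu).surjective.denseRange.dense_image
    (continuous_const_mul u) hA
  exact huA.mono (by rintro _ ⟨p, hp, rfl⟩; exact Algebra.mul_mem_of_mem_adjoin_range hM hp)

section Coordinates

variable {X ι F : Type*} [TopologicalSpace X] [NormedAddCommGroup F] [InnerProductSpace ℝ F]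
  (b : HilbertBasis ι ℝ F) (Φ : C(X, F))

noncomputable def HilbertBasis.coordComp (i : ι) : C(X, ℝ) := ⟨fun x => ⟪b i, Φ x⟫_ℝ, by fun_prop⟩

@[simp]
theorem HilbertBasis.coordComp_apply (i : ι) (x : X) : b.coordComp Φ i x = ⟪b i, Φ x⟫_ℝ := rfl

theorem HilbertBasis.separatesPoints_adjoin_coordComp (hΦ : Function.Injective Φ) :
    (Algebra.adjoin ℝ (Set.range (b.coordComp Φ))).SeparatesPoints := by
  intro x y hxy
  obtain ⟨i, hi⟩ : ∃ i, b.repr (Φ x) i ≠ b.repr (Φ y) i := by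
    by_contra! h
    exact hxy (hΦ (b.repr.injective (lp.ext (funext h))))
  exact ⟨b.coordComp Φ i, ⟨_, Algebra.subset_adjoin ⟨i, rfl⟩, rfl⟩,
    by simpa [b.repr_apply_apply] using hi⟩

end Coordinates

theorem gaussian_type_kernel_universal_general {X : Type*} {F : Type*}
    [MetricSpace X] [CompactSpace X]
    [NormedAddCommGroup F] [InnerProductSpace ℝ F] [CompleteSpace F]
    (Φ : X → F) (hΦ_cont : Continuous Φ) (hΦ_inj : Function.Injective Φ)
    (γ : ℝ) (hγ : 0 < γ) :
    Dense (↑(Submodule.span ℝ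
        {g : C(X, ℝ) | ∃ y : X, ∀ x : X, g x = Real.exp (-γ * ‖Φ x - Φ y‖ ^ 2)}) :
      Set C(X, ℝ)) := by
  classical
  obtain ⟨W, b, -⟩ := exists_hilbertBasis ℝ F
  let ψ : C(X, lp (fun _ : Σ n : ℕ, Fin n → W => ℝ) 2) :=
    ⟨gaussianFeatureMap b hγ.le ∘ Φ, (continuous_gaussianFeatureMap b hγ.le).comp hΦ_cont⟩
  let u : C(X, ℝ) := ⟨fun x => Real.exp (-γ * ‖Φ x‖ ^ 2), by fun_prop⟩
  set M := Submodule.span ℝ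
    {g : C(X, ℝ) | ∃ y : X, ∀ x : X, g x = Real.exp (-γ * ‖Φ x - Φ y‖ ^ 2)}
  have hkernel : Submodule.span ℝ (Set.range fun y => ψ.innerCLM (ψ y)) ≤ M := by
    refine Submodule.span_mono ?_
    rintro _ ⟨y, rfl⟩
    exact ⟨y, fun x => inner_gaussianFeatureMap b hγ.le (Φ x) (Φ y)⟩
  have hmonomial (n : ℕ) (v : Fin n → W) :
      u * ∏ k, b.coordComp ⟨Φ, hΦ_cont⟩ (v k) ∈ M.topologicalClosure := by
    have hfeature := Submodule.topologicalClosure_mono hkernel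
      (ψ.innerCLM_mem_closure_span (lp.single 2 ⟨n, v⟩ 1))
    have hweight : √((2 * γ) ^ n / n !) ≠ 0 := by positivity
    have hψ : ψ.innerCLM (lp.single 2 ⟨n, v⟩ 1) =
        √((2 * γ) ^ n / n !) • (u * ∏ k, b.coordComp ⟨Φ, hΦ_cont⟩ (v k)) := by
      ext x
      simp [ψ, u, inner_gaussianFeatureMap_single, gaussianFeature]
    rwa [hψ, Submodule.smul_mem_iff _ hweight] at hfeature
  have hu : IsUnit u := (ContinuousMap.isUnit_iff_forall_ne_zero u).2 fun x => (Real.exp_pos _).ne'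
  exact dense_closure.1 (ContinuousMap.dense_of_mul_prod_mem hu
    (b.separatesPoints_adjoin_coordComp ⟨Φ, hΦ_cont⟩ hΦ_inj) hmonomial)

/-- **Universality of Gaussian-type kernels (Christmann–Steinwart, Thm 2.2).**
Let `(X, d_X)` be a nonempty compact metric space, `F` a separable real Hilbert space,
`Φ : X → F` continuous and injective, and `γ > 0`.  Then the linear span of the kernel
sections `x ↦ exp(−γ‖Φ(x) − Φ(y)‖²)`, `y ∈ X`, is dense in `C(X, ℝ)` with the supremum norm,
i.e. the Gaussian-type kernel `K(x,y) = exp(−γ‖Φ(x) − Φ(y)‖²)` is universal on `X`. -/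
theorem gaussian_type_kernel_universal {X : Type*} {F : Type*}
    [MetricSpace X] [CompactSpace X] [Nonempty X]
    [NormedAddCommGroup F] [InnerProductSpace ℝ F] [CompleteSpace F]
    [TopologicalSpace.SeparableSpace F]
    (Φ : X → F) (hΦ_cont : Continuous Φ) (hΦ_inj : Function.Injective Φ)
    (γ : ℝ) (hγ : 0 < γ) :
    Dense (↑(Submodule.span ℝ
        {g : C(X, ℝ) | ∃ y : X, ∀ x : X, g x = Real.exp (-γ * ‖Φ x - Φ y‖ ^ 2)}) :
      Set C(X, ℝ)) :=
  gaussian_type_kernel_universal_general Φ hΦ_cont hΦ_inj γ hγ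
end

section
/- Let H be a real Hilbert space, κ > 0, T ∈ ℕ, and u_1, …, u_T, v_1, …, v_T ∈ H with ‖u_t‖ ≤ κ and ‖v_t‖ ≤ κ for all t. Then for every f ∈ H, ‖(1/T) Σ_{t=1}^T (⟨f, u_t⟩ u_t − ⟨f, v_t⟩ v_t)‖²_H ≤ (4κ² ‖f‖²_H / T) Σ_{t=1}^T ‖u_t − v_t‖²_H. In particular, the operator norm of the difference between the empirical covariance-type operators f ↦ (1/T)Σ⟨f,u_t⟩u_t and f ↦ (1/T)Σ⟨f,v_t⟩v_t is at most 2κ · ((1/T) Σ_t ‖u_t − v_t‖²)^{1/2}. -/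
open scoped RealInnerProductSpace

/-- **Perturbation bound for empirical covariance-type operators.**
Let `H` be a real Hilbert space, `κ > 0`, and `u₁, …, u_T, v₁, …, v_T ∈ H` with `‖uₜ‖ ≤ κ`
and `‖vₜ‖ ≤ κ`.  Then for every `f ∈ H`,
`‖(1/T) ∑ₜ (⟨f,uₜ⟩uₜ − ⟨f,vₜ⟩vₜ)‖² ≤ (4κ²‖f‖²/T) ∑ₜ ‖uₜ − vₜ‖²`; in particular the operator
norm of the difference of the empirical covariance-type operators is at most
`2κ·((1/T) ∑ₜ ‖uₜ − vₜ‖²)^{1/2}`. -/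
theorem covariance_operator_perturbation {H : Type*}
    [NormedAddCommGroup H] [InnerProductSpace ℝ H] [CompleteSpace H]
    (κ : ℝ) (hκ : 0 < κ) (T : ℕ) (hT : 0 < T) (u v : Fin T → H)
    (hu : ∀ t, ‖u t‖ ≤ κ) (hv : ∀ t, ‖v t‖ ≤ κ) :
    (∀ f : H,
      ‖(T : ℝ)⁻¹ • ∑ t, (⟪f, u t⟫ • u t - ⟪f, v t⟫ • v t)‖ ^ 2
        ≤ (4 * κ ^ 2 * ‖f‖ ^ 2 / T) * ∑ t, ‖u t - v t‖ ^ 2)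
    ∧ (∀ f : H,
      ‖(T : ℝ)⁻¹ • ∑ t, (⟪f, u t⟫ • u t - ⟪f, v t⟫ • v t)‖
        ≤ 2 * κ * Real.sqrt ((T : ℝ)⁻¹ * ∑ t, ‖u t - v t‖ ^ 2) * ‖f‖) := by
  have hTpos : (0 : ℝ) < T := by exact_mod_cast hT
  set S : ℝ := (T : ℝ)⁻¹ * ∑ t, ‖u t - v t‖ ^ 2 with hS
  have hSnn : 0 ≤ S := by positivity
  have key : ∀ f : H,
      ‖(T : ℝ)⁻¹ • ∑ t, (⟪f, u t⟫ • u t - ⟪f, v t⟫ • v t)‖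
        ≤ 2 * κ * Real.sqrt S * ‖f‖ := by
    intro f
    have hpt : ∀ t, ‖⟪f, u t⟫ • u t - ⟪f, v t⟫ • v t‖ ≤ 2 * κ * ‖f‖ * ‖u t - v t‖ := by
      intro t
      have hdecomp : ⟪f, u t⟫ • u t - ⟪f, v t⟫ • v t
          = ⟪f, u t - v t⟫ • u t + ⟪f, v t⟫ • (u t - v t) := by
        rw [inner_sub_right, sub_smul, smul_sub]; abel
      rw [hdecomp]
      calc ‖⟪f, u t - v t⟫ • u t + ⟪f, v t⟫ • (u t - v t)‖
          ≤ ‖⟪f, u t - v t⟫ • u t‖ + ‖⟪f, v t⟫ • (u t - v t)‖ := norm_add_le _ _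
        _ = |⟪f, u t - v t⟫| * ‖u t‖ + |⟪f, v t⟫| * ‖u t - v t‖ := by
            rw [norm_smul, norm_smul, Real.norm_eq_abs, Real.norm_eq_abs]
        _ ≤ (‖f‖ * ‖u t - v t‖) * κ + (‖f‖ * ‖v t‖) * ‖u t - v t‖ := by
            exact add_le_add
              (mul_le_mul (abs_real_inner_le_norm _ _) (hu t) (norm_nonneg _) (by positivity))
              (mul_le_mul_of_nonneg_right (abs_real_inner_le_norm _ _) (norm_nonneg _))
        _ ≤ (‖f‖ * ‖u t - v t‖) * κ + (‖f‖ * κ) * ‖u t - v t‖ := by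
            gcongr; exact hv t
        _ = 2 * κ * ‖f‖ * ‖u t - v t‖ := by ring
    have hsum : ‖∑ t, (⟪f, u t⟫ • u t - ⟪f, v t⟫ • v t)‖
        ≤ 2 * κ * ‖f‖ * ∑ t, ‖u t - v t‖ := by
      calc ‖∑ t, (⟪f, u t⟫ • u t - ⟪f, v t⟫ • v t)‖
          ≤ ∑ t, ‖⟪f, u t⟫ • u t - ⟪f, v t⟫ • v t‖ := norm_sum_le _ _
        _ ≤ ∑ t, 2 * κ * ‖f‖ * ‖u t - v t‖ := Finset.sum_le_sum fun t _ => hpt t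
        _ = 2 * κ * ‖f‖ * ∑ t, ‖u t - v t‖ := by rw [Finset.mul_sum]
    have hCS : (T : ℝ)⁻¹ * ∑ t, ‖u t - v t‖ ≤ Real.sqrt S := by
      have h1 : (∑ t, ‖u t - v t‖) ^ 2 ≤ (T : ℝ) * ∑ t, ‖u t - v t‖ ^ 2 := by
        have := sq_sum_le_card_mul_sum_sq (s := (Finset.univ : Finset (Fin T)))
          (f := fun t => ‖u t - v t‖)
        simpa using this
      rw [show Real.sqrt S = Real.sqrt S from rfl]
      have h2 : ((T : ℝ)⁻¹ * ∑ t, ‖u t - v t‖) ^ 2 ≤ S := by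
        rw [mul_pow, hS]
        have : ((T:ℝ)⁻¹)^2 * (∑ t, ‖u t - v t‖) ^ 2
            ≤ ((T:ℝ)⁻¹)^2 * ((T : ℝ) * ∑ t, ‖u t - v t‖ ^ 2) := by
          gcongr
        refine this.trans_eq ?_
        field_simp
      have h3 : 0 ≤ (T : ℝ)⁻¹ * ∑ t, ‖u t - v t‖ := by positivity
      calc (T : ℝ)⁻¹ * ∑ t, ‖u t - v t‖
          = Real.sqrt (((T : ℝ)⁻¹ * ∑ t, ‖u t - v t‖) ^ 2) := by
            rw [Real.sqrt_sq h3]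
        _ ≤ Real.sqrt S := Real.sqrt_le_sqrt h2
    calc ‖(T : ℝ)⁻¹ • ∑ t, (⟪f, u t⟫ • u t - ⟪f, v t⟫ • v t)‖
        = (T : ℝ)⁻¹ * ‖∑ t, (⟪f, u t⟫ • u t - ⟪f, v t⟫ • v t)‖ := by
          rw [norm_smul, Real.norm_eq_abs, abs_of_pos (by positivity)]
      _ ≤ (T : ℝ)⁻¹ * (2 * κ * ‖f‖ * ∑ t, ‖u t - v t‖) := by
          gcongr
      _ = 2 * κ * ‖f‖ * ((T : ℝ)⁻¹ * ∑ t, ‖u t - v t‖) := by ring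
      _ ≤ 2 * κ * ‖f‖ * Real.sqrt S := by gcongr
      _ = 2 * κ * Real.sqrt S * ‖f‖ := by ring
  refine ⟨fun f => ?_, key⟩
  have h := key f
  have hnn : (0:ℝ) ≤ ‖(T : ℝ)⁻¹ • ∑ t, (⟪f, u t⟫ • u t - ⟪f, v t⟫ • v t)‖ := norm_nonneg _
  have hsq := mul_self_le_mul_self hnn h
  have hSsq : Real.sqrt S ^ 2 = S := Real.sq_sqrt hSnn
  calc ‖(T : ℝ)⁻¹ • ∑ t, (⟪f, u t⟫ • u t - ⟪f, v t⟫ • v t)‖ ^ 2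
      ≤ (2 * κ * Real.sqrt S * ‖f‖) ^ 2 := by
        rw [sq, sq]; exact hsq
    _ = 4 * κ ^ 2 * ‖f‖ ^ 2 * S := by rw [mul_pow, mul_pow, mul_pow, hSsq]; ring
    _ = (4 * κ ^ 2 * ‖f‖ ^ 2 / T) * ∑ t, ‖u t - v t‖ ^ 2 := by
        rw [hS]; ring
end
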